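/- Let φ : ℝ → ℝ be integrable with φ ≥ 0, support contained in [0, ∞), and ∫_ℝ φ < 1, and let ψ := ∑_{k=1}^∞ φ^{⋆k} be the (integrable) sum of the iterated convolutions of φ. Denote by 𝓕f(ξ) = ∫_ℝ f(t) e^{−2πi t ξ} dt the Fourier transform. Then for every ξ ∈ ℝ one has 𝓕φ(ξ) ≠ 1, and 𝓕ψ(ξ) = 𝓕φ(ξ) / (1 − 𝓕φ(ξ)); equivalently, 1 + 𝓕ψ(ξ) ≠ 0 and 𝓕φ(ξ) = 𝓕ψ(ξ) (1 + 𝓕ψ(ξ))^{-1}. -/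

import Mathlib

open MeasureTheory
open scoped FourierTransform

/-- The convolution `(u ⋆ v)(t) = ∫_ℝ u(t - s) v(s) ds`. -/
noncomputable def conv (u v : ℝ → ℝ) : ℝ → ℝ := fun t => ∫ s : ℝ, u (t - s) * v s

/-- Iterated convolutions: `iterConv f 1 = f^{⋆1} = f` and
`iterConv f (k+1) = f^{⋆(k+1)} = f ⋆ f^{⋆k}` (the value at `0` is a junk value). -/
noncomputable def iterConv (f : ℝ → ℝ) : ℕ → ℝ → ℝ
  | 0 => fun _ => 0
  | 1 => f
  | (k + 2) => conv f (iterConv f (k + 1))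

/-!
Since `φ ≥ 0`, `‖𝓕φ(ξ)‖ ≤ ∫ φ < 1`. The Fourier transform turns `φ^{⋆k}` into `(𝓕φ(ξ))^k`, and
`∑ₖ ∫ |φ^{⋆k}| = ∑ₖ (∫ φ)^k < ∞` lets it commute with the series defining `ψ`; hence `𝓕ψ(ξ)` is the
geometric series `∑_{k ≥ 1} (𝓕φ(ξ))^k = 𝓕φ(ξ) / (1 - 𝓕φ(ξ))`.
-/

open scoped Convolution
open ContinuousLinearMap

theorem Real.fourier_tsum_of_summable_integral_norm {ι V E : Type*} [Countable ι]
    [NormedAddCommGroup V] [InnerProductSpace ℝ V] [MeasurableSpace V] [BorelSpace V]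
    [FiniteDimensional ℝ V] [NormedAddCommGroup E] [NormedSpace ℂ E] {f : ι → V → E}
    (hf : ∀ i, Integrable (f i)) (hsum : Summable fun i => ∫ v, ‖f i v‖) (ξ : V) :
    𝓕 (fun v => ∑' i, f i v) ξ = ∑' i, 𝓕 (f i) ξ := by
  simp_rw [Real.fourier_eq, ← tsum_const_smul']
  refine (integral_tsum_of_summable_integral_norm (fun i => ?_) (by simpa using hsum)).symm
  exact (Real.fourierIntegral_convergent_iff ξ).2 (hf i)

theorem ofReal_conv_eq_convolution (u v : ℝ → ℝ) :
    (fun t => (conv u v t : ℂ)) = (fun t => (v t : ℂ)) ⋆[lsmul ℂ ℂ] (fun t => (u t : ℂ)) := by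
  ext t
  simp only [conv, convolution, lsmul_apply, smul_eq_mul, ← Complex.ofReal_mul, mul_comm]
  exact integral_ofReal.symm

theorem conv_eq_convolution (u v : ℝ → ℝ) : conv u v = v ⋆[mul ℝ ℝ] u := by
  ext t
  simp only [conv, convolution, mul_apply', mul_comm]

theorem integrable_conv {u v : ℝ → ℝ} (hu : Integrable u) (hv : Integrable v) :
    Integrable (conv u v) :=
  conv_eq_convolution u v ▸ hv.integrable_convolution _ hu

theorem integral_conv {u v : ℝ → ℝ} (hu : Integrable u) (hv : Integrable v) :
    ∫ t, conv u v t = (∫ t, u t) * ∫ t, v t := by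
  rw [conv_eq_convolution, integral_convolution _ hv hu, mul_apply', mul_comm]

theorem fourier_conv {u v : ℝ → ℝ} (hu : Integrable u) (hv : Integrable v) (ξ : ℝ) :
    𝓕 (fun t => (conv u v t : ℂ)) ξ = 𝓕 (fun t => (u t : ℂ)) ξ * 𝓕 (fun t => (v t : ℂ)) ξ := by
  rw [ofReal_conv_eq_convolution, mul_comm]
  exact Real.fourier_smul_convolution_eq (hv.ofReal (𝕜 := ℂ)) (hu.ofReal (𝕜 := ℂ)) ξ

theorem conv_nonneg {u v : ℝ → ℝ} (hu : ∀ t, 0 ≤ u t) (hv : ∀ t, 0 ≤ v t) (t : ℝ) :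
    0 ≤ conv u v t :=
  integral_nonneg fun _ => mul_nonneg (hu _) (hv _)

section iterConv

variable {φ : ℝ → ℝ}

theorem iterConv_nonneg (hφ : ∀ t, 0 ≤ φ t) (n : ℕ) (t : ℝ) : 0 ≤ iterConv φ n t := by
  fun_induction iterConv φ n generalizing t with
  | case1 => rfl
  | case2 => exact hφ t
  | case3 k ih => exact conv_nonneg hφ ih t

theorem integrable_iterConv (hφ : Integrable φ) (n : ℕ) : Integrable (iterConv φ n) := by
  fun_induction iterConv φ n with
  | case1 => exact integrable_zero _ _ _
  | case2 => exact hφ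
  | case3 k ih => exact integrable_conv hφ ih

theorem integral_iterConv (hφ : Integrable φ) (n : ℕ) :
    ∫ t, iterConv φ (n + 1) t = (∫ t, φ t) ^ (n + 1) := by
  induction n with
  | zero => simp [iterConv]
  | succ k ih =>
    rw [iterConv, integral_conv hφ (integrable_iterConv hφ _), ih, pow_succ' _ (k + 1)]

theorem fourier_iterConv (hφ : Integrable φ) (n : ℕ) (ξ : ℝ) :
    𝓕 (fun t => (iterConv φ (n + 1) t : ℂ)) ξ = 𝓕 (fun t => (φ t : ℂ)) ξ ^ (n + 1) := by
  induction n with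
  | zero => simp [iterConv]
  | succ k ih =>
    rw [iterConv, fourier_conv hφ (integrable_iterConv hφ _), ih, pow_succ' _ (k + 1)]

end iterConv

theorem norm_fourier_ofReal_le_integral {φ : ℝ → ℝ} (hφ : ∀ t, 0 ≤ φ t) (ξ : ℝ) :
    ‖𝓕 (fun t => (φ t : ℂ)) ξ‖ ≤ ∫ t, φ t := calc
  _ ≤ ∫ t, ‖(φ t : ℂ)‖ := VectorFourier.norm_fourierIntegral_le_integral_norm _ _ _ _ _
  _ = ∫ t, φ t := by simp_rw [Complex.norm_real, Real.norm_of_nonneg (hφ _)]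

theorem tsum_pow_succ_of_norm_lt_one {𝕜 : Type*} [NormedDivisionRing 𝕜] [CompleteSpace 𝕜] {z : 𝕜}
    (hz : ‖z‖ < 1) : ∑' k : ℕ, z ^ (k + 1) = z * (1 - z)⁻¹ := by
  simp_rw [pow_succ']
  rw [tsum_mul_left, tsum_geometric_of_norm_lt_one hz]

theorem fourier_tsum_iterConv {φ : ℝ → ℝ} (hφ_int : Integrable φ) (hφ_nonneg : ∀ t, 0 ≤ φ t)
    (hφ_norm : ∫ t, φ t < 1) (ξ : ℝ) :
    𝓕 (fun t => ((∑' k : ℕ, iterConv φ (k + 1) t : ℝ) : ℂ)) ξ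
      = ∑' k : ℕ, 𝓕 (fun t => (φ t : ℂ)) ξ ^ (k + 1) := by
  have hsum : Summable fun k : ℕ => ∫ t, ‖(iterConv φ (k + 1) t : ℂ)‖ := by
    simp_rw [Complex.norm_real, Real.norm_of_nonneg (iterConv_nonneg hφ_nonneg _ _),
      integral_iterConv hφ_int]
    exact (summable_nat_add_iff 1).2
      (summable_geometric_of_lt_one (integral_nonneg hφ_nonneg) hφ_norm)
  simp_rw [Complex.ofReal_tsum]
  rw [Real.fourier_tsum_of_summable_integral_norm
    (fun k => (integrable_iterConv hφ_int _).ofReal) hsum]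
  simp_rw [fourier_iterConv hφ_int]

theorem fourier_transform_dressed_kernel_general
    (φ : ℝ → ℝ) (hφ_int : Integrable φ) (hφ_nonneg : ∀ t, 0 ≤ φ t)
    (hφ_norm : (∫ t : ℝ, φ t) < 1)
    (ψ : ℝ → ℝ) (hψ : ψ = fun t => ∑' k : ℕ, iterConv φ (k + 1) t) :
    ∀ ξ : ℝ,
      𝓕 (fun t => (φ t : ℂ)) ξ ≠ 1 ∧
      𝓕 (fun t => (ψ t : ℂ)) ξ
        = 𝓕 (fun t => (φ t : ℂ)) ξ / (1 - 𝓕 (fun t => (φ t : ℂ)) ξ) ∧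
      1 + 𝓕 (fun t => (ψ t : ℂ)) ξ ≠ 0 ∧
      𝓕 (fun t => (φ t : ℂ)) ξ
        = 𝓕 (fun t => (ψ t : ℂ)) ξ * (1 + 𝓕 (fun t => (ψ t : ℂ)) ξ)⁻¹ := by
  intro ξ
  set F := 𝓕 (fun t => (φ t : ℂ)) ξ
  have hF : ‖F‖ < 1 := (norm_fourier_ofReal_le_integral hφ_nonneg ξ).trans_lt hφ_norm
  have hF1 : F ≠ 1 := fun h => by simp [h] at hF
  have h1F : 1 - F ≠ 0 := sub_ne_zero.2 hF1.symm
  have hψF : 𝓕 (fun t => (ψ t : ℂ)) ξ = F / (1 - F) := by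
    rw [hψ, fourier_tsum_iterConv hφ_int hφ_nonneg hφ_norm, tsum_pow_succ_of_norm_lt_one hF,
      div_eq_mul_inv]
  have h_one_add : 1 + 𝓕 (fun t => (ψ t : ℂ)) ξ = (1 - F)⁻¹ := by
    rw [hψF]
    field_simp
    ring
  refine ⟨hF1, hψF, h_one_add ▸ inv_ne_zero h1F, ?_⟩
  rw [h_one_add, hψF, inv_inv, div_mul_cancel₀ _ h1F]

/-- For an integrable, nonnegative, causal kernel `φ` with `∫ φ < 1`, and the dressed kernel
`ψ = ∑_{k≥1} φ^{⋆k}`, the Fourier transforms (with kernel `e^{-2πi t ξ}`) satisfy, for every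
`ξ ∈ ℝ`: `𝓕φ(ξ) ≠ 1`, `𝓕ψ(ξ) = 𝓕φ(ξ)/(1 - 𝓕φ(ξ))`, `1 + 𝓕ψ(ξ) ≠ 0`, and
`𝓕φ(ξ) = 𝓕ψ(ξ)(1 + 𝓕ψ(ξ))⁻¹`. -/
theorem fourier_transform_dressed_kernel
    (φ : ℝ → ℝ) (hφ_int : Integrable φ) (hφ_nonneg : ∀ t, 0 ≤ φ t)
    (hφ_causal : ∀ t < (0 : ℝ), φ t = 0) (hφ_norm : (∫ t : ℝ, φ t) < 1)
    (ψ : ℝ → ℝ) (hψ : ψ = fun t => ∑' k : ℕ, iterConv φ (k + 1) t) :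
    ∀ ξ : ℝ,
      𝓕 (fun t => (φ t : ℂ)) ξ ≠ 1 ∧
      𝓕 (fun t => (ψ t : ℂ)) ξ
        = 𝓕 (fun t => (φ t : ℂ)) ξ / (1 - 𝓕 (fun t => (φ t : ℂ)) ξ) ∧
      1 + 𝓕 (fun t => (ψ t : ℂ)) ξ ≠ 0 ∧
      𝓕 (fun t => (φ t : ℂ)) ξ
        = 𝓕 (fun t => (ψ t : ℂ)) ξ * (1 + 𝓕 (fun t => (ψ t : ℂ)) ξ)⁻¹ :=
  fourier_transform_dressed_kernel_general φ hφ_int hφ_nonneg hφ_norm ψ hψ
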